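/- arXiv:1006.0159 — 11 statements merged into one kernel-verified Lean document; each statement's English description precedes it below -/
import Mathlib

section
/- Let A and B be integral domains, f : A → B a ring homomorphism, and J a proper ideal of B. If the amalgamation A ⋈^f J is a Bézout ring, then f(A) ∩ J = 0. -/
/-- A commutative ring is an elementary divisor ring if every square matrix is
equivalent to a diagonal matrix via invertible matrices. -/
def IsElementaryDivisorRing (R : Type*) [CommRing R] : Prop :=
  ∀ (n : ℕ) (M : Matrix (Fin n) (Fin n) R),
    ∃ P Q : Matrix (Fin n) (Fin n) R, IsUnit P ∧ IsUnit Q ∧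
      ∃ d : Fin n → R, P * M * Q = Matrix.diagonal d

/-- A commutative ring is Hermite if any pair `a, b` can be written `a = a₁d`,
`b = b₁d` with `Ra₁ + Rb₁ = R`. -/
def IsHermiteRing (R : Type*) [CommRing R] : Prop :=
  ∀ a b : R, ∃ a₁ b₁ d : R, a = a₁ * d ∧ b = b₁ * d ∧ Ideal.span {a₁, b₁} = ⊤

/-- The amalgamation `A ⋈^f J = {(a, f a + j) | a ∈ A, j ∈ J}` as a subring of `A × B`. -/
def amalgamation {A B : Type*} [CommRing A] [CommRing B] (f : A →+* B) (J : Ideal B) :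
    Subring (A × B) where
  carrier := {p | p.2 - f p.1 ∈ J}
  mul_mem' := by
    intro p q hp hq
    have h : (p * q).2 - f (p * q).1
        = p.2 * (q.2 - f q.1) + f q.1 * (p.2 - f p.1) := by
      simp only [Prod.fst_mul, Prod.snd_mul, map_mul]; ring
    show (p * q).2 - f (p * q).1 ∈ J
    rw [h]
    exact J.add_mem (J.mul_mem_left _ hq) (J.mul_mem_left _ hp)
  one_mem' := by simp
  add_mem' := by
    intro p q hp hq
    have h : (p + q).2 - f (p + q).1 = (p.2 - f p.1) + (q.2 - f q.1) := by
      simp only [Prod.fst_add, Prod.snd_add, map_add]; ring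
    show (p + q).2 - f (p + q).1 ∈ J
    rw [h]
    exact J.add_mem hp hq
  zero_mem' := by simp
  neg_mem' := by
    intro p hp
    have h : (-p).2 - f (-p).1 = -(p.2 - f p.1) := by
      simp only [Prod.fst_neg, Prod.snd_neg, map_neg]; ring
    show (-p).2 - f (-p).1 ∈ J
    rw [h]
    exact J.neg_mem hp

/-- The subring `f(A) + J` of `B`. -/
def rangeAddIdeal {A B : Type*} [CommRing A] [CommRing B] (f : A →+* B) (J : Ideal B) :
    Subring B where
  carrier := {b | ∃ a, b - f a ∈ J}
  mul_mem' := by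
    rintro b b' ⟨a, ha⟩ ⟨a', ha'⟩
    refine ⟨a * a', ?_⟩
    have h : b * b' - f (a * a') = b * (b' - f a') + f a' * (b - f a) := by
      simp only [map_mul]; ring
    show b * b' - f (a * a') ∈ J
    rw [h]
    exact J.add_mem (J.mul_mem_left _ ha') (J.mul_mem_left _ ha)
  one_mem' := ⟨1, by simp⟩
  add_mem' := by
    rintro b b' ⟨a, ha⟩ ⟨a', ha'⟩
    refine ⟨a + a', ?_⟩
    have h : b + b' - f (a + a') = (b - f a) + (b' - f a') := by
      simp only [map_add]; ring
    show b + b' - f (a + a') ∈ J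
    rw [h]
    exact J.add_mem ha ha'
  zero_mem' := ⟨0, by simp⟩
  neg_mem' := by
    rintro b ⟨a, ha⟩
    refine ⟨-a, ?_⟩
    have h : -b - f (-a) = -(b - f a) := by simp only [map_neg]; ring
    show -b - f (-a) ∈ J
    rw [h]
    exact J.neg_mem ha

/-!
Suppose `f a ∈ J` with `f a ≠ 0`. The elements `x = (a, 0)` and `y = (0, f a)` lie in
`A ⋈^f J`; if they generated a principal ideal `(d)`, then writing `x = u d` and
`d = s x + t y` gives `u.1 s.1 = 1` in `A` and, since `d.2 ≠ 0`, `u.2 = 0` in `B`.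
Membership of `u` in the amalgamation then puts the unit `f u.1` into `J`.
-/

theorem mem_amalgamation {A B : Type*} [CommRing A] [CommRing B] {f : A →+* B} {J : Ideal B}
    {p : A × B} : p ∈ amalgamation f J ↔ p.2 - f p.1 ∈ J :=
  Iff.rfl

theorem Subring.exists_isUnit_fst_snd_eq_zero_of_isPrincipal_span_pair
    {A B : Type*} [CommRing A] [NoZeroDivisors A] [CommRing B] [NoZeroDivisors B]
    (S : Subring (A × B)) {a : A} {b : B} (ha : a ≠ 0) (hb : b ≠ 0)
    (hx : (a, 0) ∈ S) (hy : (0, b) ∈ S)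
    (hP : (Ideal.span {⟨(a, 0), hx⟩, ⟨(0, b), hy⟩} : Ideal S).IsPrincipal) :
    ∃ u ∈ S, IsUnit u.1 ∧ u.2 = 0 := by
  obtain ⟨d, hd⟩ := hP
  have hd' : Ideal.span {⟨(a, 0), hx⟩, ⟨(0, b), hy⟩} = Ideal.span {d} := hd
  have hxd : (⟨(a, 0), hx⟩ : S) ∈ Ideal.span {d} := hd' ▸ Ideal.subset_span (by simp)
  have hyd : (⟨(0, b), hy⟩ : S) ∈ Ideal.span {d} := hd' ▸ Ideal.subset_span (by simp)
  obtain ⟨u, hu⟩ := Ideal.mem_span_singleton'.mp hxd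
  obtain ⟨v, hv⟩ := Ideal.mem_span_singleton'.mp hyd
  obtain ⟨s, t, hst⟩ := Ideal.mem_span_pair.mp (hd' ▸ Ideal.mem_span_singleton_self d)
  have hu₁ : u.1.1 * d.1.1 = a := congrArg (fun z : S => z.1.1) hu
  have hu₂ : u.1.2 * d.1.2 = 0 := congrArg (fun z : S => z.1.2) hu
  have hv₂ : v.1.2 * d.1.2 = b := congrArg (fun z : S => z.1.2) hv
  have hd₁ : s.1.1 * a = d.1.1 := by simpa using congrArg (fun z : S => z.1.1) hst
  have hd₂ : d.1.2 ≠ 0 := by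
    intro h
    exact hb (by rw [← hv₂, h, mul_zero])
  refine ⟨u, u.2, IsUnit.of_mul_eq_one s.1.1 ?_, (mul_eq_zero.mp hu₂).resolve_right hd₂⟩
  refine (mul_eq_left₀ ha).mp ?_
  calc a * (u.1.1 * s.1.1) = u.1.1 * (s.1.1 * a) := by ring
    _ = a := by rw [hd₁, hu₁]

theorem stmt0 {A B : Type*} [CommRing A] [IsDomain A] [CommRing B] [IsDomain B]
    (f : A →+* B) (J : Ideal B) (hJ : J ≠ ⊤)
    (h : IsBezout (amalgamation f J)) :
    ∀ a : A, f a ∈ J → f a = 0 := by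
  intro a hfa
  by_contra hne
  have ha : a ≠ 0 := by
    rintro rfl
    exact hne (map_zero f)
  have hx : (a, 0) ∈ amalgamation f J := mem_amalgamation.mpr (by simpa using J.neg_mem hfa)
  have hy : (0, f a) ∈ amalgamation f J := mem_amalgamation.mpr (by simpa using hfa)
  obtain ⟨u, hu, hunit, hu₂⟩ :=
    (amalgamation f J).exists_isUnit_fst_snd_eq_zero_of_isPrincipal_span_pair ha hne hx hy
      (IsBezout.iff_span_pair_isPrincipal.mp h _ _)
  have hfu : f u.1 ∈ J := by
    simpa [hu₂] using J.neg_mem (mem_amalgamation.mp hu)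
  exact hJ (J.eq_top_of_isUnit_mem hfu (hunit.map f))
end

section
/- Let A and B be integral domains, f : A → B a non-injective ring homomorphism, and J an ideal of B with J ≠ B. If A ⋈^f J is a Bézout ring, then J = 0. -/
/-! Pick `a ≠ 0` in `ker f` and `j ≠ 0` in `J`. If the ideal of `A ⋈^f J` generated by `(a, 0)`
and `(0, j)` were generated by `d = p (a, 0) + q (0, j)`, then writing `(a, 0) = r d` gives
`a = r₁ p₁ a`, so `r₁` is a unit of `A`, and `0 = r₂ d₂` with `d₂ ≠ 0` (as `d` divides `(0, j)`), so
`r₂ = 0`. But then `r ∈ A ⋈^f J` puts the unit `f r₁ = -(r₂ - f r₁)` into `J`. -/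

namespace amalgamation

variable {A B : Type*} [CommRing A] [CommRing B] {f : A →+* B} {J : Ideal B}

theorem mem_iff {p : A × B} : p ∈ amalgamation f J ↔ p.2 - f p.1 ∈ J := Iff.rfl

theorem mk_zero_mem_of_map_eq_zero {a : A} (ha : f a = 0) :
    ((a, 0) : A × B) ∈ amalgamation f J := by
  simp [mem_iff, ha]

theorem zero_mk_mem {j : B} (hj : j ∈ J) : ((0, j) : A × B) ∈ amalgamation f J := by
  simpa [mem_iff] using hj

theorem ideal_eq_top_of_isUnit_fst {r : A × B} (hr : r ∈ amalgamation f J) (h₁ : IsUnit r.1)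
    (h₂ : r.2 = 0) : J = ⊤ := by
  have hfr : f r.1 ∈ J := by simpa [mem_iff, h₂] using hr
  exact Ideal.eq_top_of_isUnit_mem J hfr (h₁.map f)

theorem not_isPrincipal_span_mk_zero_zero_mk [IsDomain A] [IsDomain B] (hJ : J ≠ ⊤)
    {a : A} (ha : a ≠ 0) (hfa : f a = 0) {j : B} (hjJ : j ∈ J) (hj : j ≠ 0) :
    ¬ (Ideal.span {⟨(a, 0), mk_zero_mem_of_map_eq_zero hfa⟩, ⟨(0, j), zero_mk_mem hjJ⟩} :
      Ideal (amalgamation f J)).IsPrincipal := by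
  set u : amalgamation f J := ⟨(a, 0), mk_zero_mem_of_map_eq_zero hfa⟩
  set v : amalgamation f J := ⟨(0, j), zero_mk_mem hjJ⟩
  rintro ⟨d, hd⟩
  replace hd : Ideal.span {u, v} = Ideal.span {d} := hd
  have hu : u ∈ Ideal.span {d} := hd ▸ Ideal.subset_span (by simp)
  have hv : v ∈ Ideal.span {d} := hd ▸ Ideal.subset_span (by simp)
  have hdm : d ∈ Ideal.span {u, v} := hd ▸ Ideal.mem_span_singleton_self d
  obtain ⟨r, hr⟩ := Ideal.mem_span_singleton'.mp hu
  obtain ⟨s, hs⟩ := Ideal.mem_span_singleton'.mp hv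
  obtain ⟨p, q, hpq⟩ := Ideal.mem_span_pair.mp hdm
  have hr₁ : r.1.1 * d.1.1 = a := congrArg (fun x => x.1.1) hr
  have hr₂ : r.1.2 * d.1.2 = 0 := congrArg (fun x => x.1.2) hr
  have hs₂ : s.1.2 * d.1.2 = j := congrArg (fun x => x.1.2) hs
  have hd₁ : p.1.1 * a + q.1.1 * 0 = d.1.1 := congrArg (fun x => x.1.1) hpq
  have hunit : r.1.1 * p.1.1 = 1 := by
    refine mul_left_cancel₀ ha ?_
    linear_combination r.1.1 * hd₁ + hr₁
  have hd₂ : d.1.2 ≠ 0 := fun h0 => hj (by rw [← hs₂, h0, mul_zero])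
  exact hJ (ideal_eq_top_of_isUnit_fst r.2 (.of_mul_eq_one _ hunit)
    ((mul_eq_zero.mp hr₂).resolve_right hd₂))

end amalgamation

theorem stmt1 {A B : Type*} [CommRing A] [IsDomain A] [CommRing B] [IsDomain B]
    (f : A →+* B) (hf : ¬ Function.Injective f) (J : Ideal B) (hJ : J ≠ ⊤)
    (h : IsBezout (amalgamation f J)) :
    J = ⊥ := by
  by_contra hJ0
  obtain ⟨x, y, hxy, hne⟩ := Function.not_injective_iff.mp hf
  obtain ⟨j, hjJ, hj⟩ := Submodule.ne_bot_iff J |>.mp hJ0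
  have hfa : f (x - y) = 0 := by rw [map_sub, hxy, sub_self]
  exact amalgamation.not_isPrincipal_span_mk_zero_zero_mk hJ (sub_ne_zero.mpr hne) hfa hjJ hj
    (h.isPrincipal_of_FG _ (Submodule.fg_span (Set.toFinite _)))
end

section
/- Let A and B be commutative rings. The product ring A × B is an elementary divisor ring if and only if both A and B are elementary divisor rings. -/
/-!
Matrices over `A × B` are pairs of matrices over `A` and `B`, with componentwise ring
structure, so a pair of diagonalizations gives one over `A × B`. Conversely `A` and `B` are
quotients of `A × B`, and the property passes to quotients: lift the matrix, diagonalize it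
upstairs and map the result back down.
-/

open Matrix

section

variable {A B : Type*} [CommRing A] [CommRing B]

theorem IsElementaryDivisorRing.of_surjective (f : A →+* B) (hf : Function.Surjective f)
    (h : IsElementaryDivisorRing A) : IsElementaryDivisorRing B := by
  intro n M
  obtain ⟨P, Q, hP, hQ, d, hd⟩ := h n (M.map (Function.surjInv hf))
  refine ⟨f.mapMatrix P, f.mapMatrix Q, hP.map _, hQ.map _, f ∘ d, ?_⟩
  have hM : f.mapMatrix (M.map (Function.surjInv hf)) = M := by
    ext i j
    exact Function.surjInv_eq hf _
  rw [← hM, ← map_mul, ← map_mul, hd, RingHom.mapMatrix_apply, diagonal_map (map_zero f)]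
  rfl

variable (A B) (n : Type*) [Fintype n] [DecidableEq n]

def Matrix.prodRingEquiv : Matrix n n (A × B) ≃+* Matrix n n A × Matrix n n B :=
  { (RingHom.fst A B).mapMatrix.prod (RingHom.snd A B).mapMatrix with
    invFun := fun X => of fun i j => (X.1 i j, X.2 i j)
    left_inv := fun _ => rfl
    right_inv := fun _ => rfl }

variable {A B n}

theorem Matrix.prodRingEquiv_diagonal (d : n → A × B) :
    prodRingEquiv A B n (diagonal d) =
      (diagonal fun i => (d i).1, diagonal fun i => (d i).2) :=
  Prod.ext (diagonal_map rfl) (diagonal_map rfl)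

theorem IsElementaryDivisorRing.prod (hA : IsElementaryDivisorRing A)
    (hB : IsElementaryDivisorRing B) : IsElementaryDivisorRing (A × B) := by
  intro n M
  let e := prodRingEquiv A B (Fin n)
  obtain ⟨PA, QA, hPA, hQA, dA, hdA⟩ := hA n (e M).1
  obtain ⟨PB, QB, hPB, hQB, dB, hdB⟩ := hB n (e M).2
  refine ⟨e.symm (PA, PB), e.symm (QA, QB), (Prod.isUnit_iff.mpr ⟨hPA, hPB⟩).map _,
    (Prod.isUnit_iff.mpr ⟨hQA, hQB⟩).map _, fun i => (dA i, dB i), e.injective ?_⟩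
  simp only [map_mul, RingEquiv.apply_symm_apply, e, prodRingEquiv_diagonal]
  exact Prod.ext hdA hdB

end

theorem stmt3 (A B : Type*) [CommRing A] [CommRing B] :
    IsElementaryDivisorRing (A × B) ↔
      IsElementaryDivisorRing A ∧ IsElementaryDivisorRing B :=
  ⟨fun h => ⟨h.of_surjective (RingHom.fst A B) Prod.fst_surjective,
      h.of_surjective (RingHom.snd A B) Prod.snd_surjective⟩,
    fun ⟨hA, hB⟩ => hA.prod hB⟩
end

section
/- Let f : A → B be a ring homomorphism and J an ideal of B. If the amalgamation A ⋈^f J is an elementary divisor ring, then A is an elementary divisor ring. -/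
theorem IsElementaryDivisorRing.of_surjective_s4 {R S : Type*} [CommRing R] [CommRing S]
    (φ : R →+* S) (hφ : Function.Surjective φ) (hR : IsElementaryDivisorRing R) :
    IsElementaryDivisorRing S := by
  intro n M
  have hlift : φ.mapMatrix (M.map (Function.surjInv hφ)) = M := by
    ext i j
    exact Function.surjInv_eq hφ (M i j)
  obtain ⟨P, Q, hP, hQ, d, hd⟩ := hR n (M.map (Function.surjInv hφ))
  refine ⟨φ.mapMatrix P, φ.mapMatrix Q, hP.map _, hQ.map _, φ ∘ d, ?_⟩
  rw [← hlift, ← map_mul, ← map_mul, hd]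
  exact Matrix.diagonal_map (map_zero φ)

theorem amalgamation_fst_surjective {A B : Type*} [CommRing A] [CommRing B] (f : A →+* B)
    (J : Ideal B) : Function.Surjective ((RingHom.fst A B).comp (amalgamation f J).subtype) :=
  fun a => ⟨⟨(a, f a), show f a - f a ∈ J by simp⟩, rfl⟩

theorem stmt4 {A B : Type*} [CommRing A] [CommRing B] (f : A →+* B) (J : Ideal B)
    (h : IsElementaryDivisorRing (amalgamation f J)) :
    IsElementaryDivisorRing A :=
  h.of_surjective_s4 _ (amalgamation_fst_surjective f J)
end

section
/- Let f : A → B be a ring homomorphism, J an ideal of B, and M a square matrix with entries in A ⋈^f J. Then M is invertible over A ⋈^f J if and only if M_a is invertible over A and M_b is invertible over B. -/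
instance isLocalHom_amalgamation_subtype {A B : Type*} [CommRing A] [CommRing B] (f : A →+* B)
    (J : Ideal B) : IsLocalHom (amalgamation f J).subtype where
  map_nonunit x hx := by
    obtain ⟨u, hu⟩ := hx
    set y := (↑u⁻¹ : A × B)
    have hyx : y * x = 1 := by rw [← Subring.coe_subtype, ← hu]; exact u.inv_mul
    have hy : y ∈ amalgamation f J := by
      have h₂ : y.2 * (x : A × B).2 = 1 := congrArg Prod.snd hyx
      have h₁ : f y.1 * f (x : A × B).1 = 1 := by
        rw [← map_mul, show y.1 * (x : A × B).1 = 1 from congrArg Prod.fst hyx, map_one]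
      have hdiff : y.2 - f y.1 = -(y.2 * f y.1) * ((x : A × B).2 - f (x : A × B).1) := by
        linear_combination f y.1 * h₂ - y.2 * h₁
      show y.2 - f y.1 ∈ J
      rw [hdiff]
      exact J.mul_mem_left _ x.2
    exact .of_mul_eq_one_right (⟨y, hy⟩ : amalgamation f J) (Subtype.ext hyx)

theorem Matrix.isUnit_map_iff_of_isLocalHom {R S : Type*} [CommRing R] [CommRing S]
    {n : Type*} [Fintype n] [DecidableEq n] (g : R →+* S) [IsLocalHom g] (M : Matrix n n R) :
    IsUnit (M.map g) ↔ IsUnit M := by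
  rw [Matrix.isUnit_iff_isUnit_det, Matrix.isUnit_iff_isUnit_det, ← RingHom.mapMatrix_apply,
    ← RingHom.map_det, isUnit_map_iff]

theorem Matrix.isUnit_prod_iff {R S : Type*} [CommRing R] [CommRing S]
    {n : Type*} [Fintype n] [DecidableEq n] (M : Matrix n n (R × S)) :
    IsUnit M ↔ IsUnit (M.map Prod.fst) ∧ IsUnit (M.map Prod.snd) := by
  simp only [Matrix.isUnit_iff_isUnit_det, Prod.isUnit_iff]
  rw [show M.map Prod.fst = (RingHom.fst R S).mapMatrix M from rfl,
    show M.map Prod.snd = (RingHom.snd R S).mapMatrix M from rfl, ← RingHom.map_det,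
    ← RingHom.map_det, RingHom.coe_fst, RingHom.coe_snd]

theorem stmt6 {A B : Type*} [CommRing A] [CommRing B] (f : A →+* B) (J : Ideal B)
    {n : ℕ} (M : Matrix (Fin n) (Fin n) (amalgamation f J)) :
    IsUnit M ↔
      IsUnit (M.map (fun x => (x : A × B).1)) ∧
      IsUnit (M.map (fun x => (x : A × B).2)) := by
  rw [← Matrix.isUnit_map_iff_of_isLocalHom (amalgamation f J).subtype, Matrix.isUnit_prod_iff]
  rfl
end

section
/- Let f : A → B be a ring homomorphism and J an ideal of B. An element (a, f(a)+j) of A ⋈^f J is a unit in A ⋈^f J if and only if it is a unit in A × B, i.e., if and only if a is a unit in A and f(a)+j is a unit in B. -/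
section amalgamation

variable {A B : Type*} [CommRing A] [CommRing B] {f : A →+* B} {J : Ideal B}

theorem mem_amalgamation_iff {p : A × B} : p ∈ amalgamation f J ↔ p.2 - f p.1 ∈ J :=
  Iff.rfl

theorem mem_amalgamation_of_mul_eq_one {p q : A × B} (hp : p ∈ amalgamation f J)
    (hpq : p * q = 1) : q ∈ amalgamation f J := by
  have h₁ : p.1 * q.1 = 1 := congrArg Prod.fst hpq
  have h₂ : p.2 * q.2 = 1 := congrArg Prod.snd hpq
  have key : q.2 - f q.1 = f q.1 * q.2 * (f p.1 - p.2) :=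
    calc q.2 - f q.1 = q.2 * f (p.1 * q.1) - f q.1 * (p.2 * q.2) := by
          rw [h₁, h₂, map_one, mul_one, mul_one]
      _ = f q.1 * q.2 * (f p.1 - p.2) := by rw [map_mul]; ring
  rw [mem_amalgamation_iff, key]
  exact J.mul_mem_left _ (sub_mem_comm_iff.mp hp)

theorem isUnit_amalgamation_iff {x : amalgamation f J} : IsUnit x ↔ IsUnit (x : A × B) := by
  refine ⟨fun h => h.map (amalgamation f J).subtype, ?_⟩
  rintro ⟨u, hu⟩
  have hinv : (x : A × B) * ↑u⁻¹ = 1 := by rw [← hu, Units.mul_inv]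
  exact IsUnit.of_mul_eq_one ⟨_, mem_amalgamation_of_mul_eq_one x.2 hinv⟩ (Subtype.ext hinv)

end amalgamation

theorem stmt7 {A B : Type*} [CommRing A] [CommRing B] (f : A →+* B) (J : Ideal B)
    (x : amalgamation f J) :
    (IsUnit x ↔ IsUnit (x : A × B)) ∧
    (IsUnit (x : A × B) ↔ IsUnit (x : A × B).1 ∧ IsUnit (x : A × B).2) :=
  ⟨isUnit_amalgamation_iff, Prod.isUnit_iff⟩
end

section
/- Let A and B be integral domains, f : A → B an injective ring homomorphism, and J a proper ideal of B with f(A) ∩ J = 0. Then the projection p_B : A ⋈^f J → f(A) + J sending (a, f(a)+j) to f(a)+j is a ring isomorphism. -/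
namespace amalgamation

variable {A B : Type*} [CommRing A] [CommRing B] {f : A →+* B} {J : Ideal B}

variable (f J) in
def sndToRangeAddIdeal : amalgamation f J →+* rangeAddIdeal f J :=
  ((RingHom.snd A B).comp (amalgamation f J).subtype).codRestrict (rangeAddIdeal f J)
    fun x => ⟨(x : A × B).1, x.2⟩

theorem sndToRangeAddIdeal_surjective : Function.Surjective (sndToRangeAddIdeal f J) :=
  fun ⟨b, a, hab⟩ => ⟨⟨(a, b), hab⟩, rfl⟩

/-- An element `(a, 0)` of the kernel has `-f a ∈ J`, which forces `a = 0`. -/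
theorem sndToRangeAddIdeal_injective (hfJ : ∀ a : A, f a ∈ J → a = 0) :
    Function.Injective (sndToRangeAddIdeal f J) := by
  refine (injective_iff_map_eq_zero _).2 fun ⟨⟨a, b⟩, hab⟩ hx => ?_
  obtain rfl : b = 0 := congrArg Subtype.val hx
  have ha : f a ∈ J := by simpa using J.neg_mem hab
  obtain rfl := hfJ a ha
  rfl

end amalgamation

theorem stmt8_general {A B : Type*} [CommRing A] [CommRing B]
    (f : A →+* B) (hf : Function.Injective f) (J : Ideal B)
    (hcap : ∀ a : A, f a ∈ J → f a = 0) :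
    ∃ e : amalgamation f J ≃+* rangeAddIdeal f J,
      ∀ x : amalgamation f J, (e x : B) = (x : A × B).2 := by
  have hker : ∀ a : A, f a ∈ J → a = 0 := fun a ha => hf <| by rw [hcap a ha, map_zero]
  exact ⟨.ofBijective _ ⟨amalgamation.sndToRangeAddIdeal_injective hker,
    amalgamation.sndToRangeAddIdeal_surjective⟩, fun _ => rfl⟩

theorem stmt8 {A B : Type*} [CommRing A] [IsDomain A] [CommRing B] [IsDomain B]
    (f : A →+* B) (hf : Function.Injective f) (J : Ideal B) (hJ : J ≠ ⊤)
    (hcap : ∀ a : A, f a ∈ J → f a = 0) :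
    ∃ e : amalgamation f J ≃+* rangeAddIdeal f J,
      ∀ x : amalgamation f J, (e x : B) = (x : A × B).2 :=
  stmt8_general f hf J hcap
end

section
/- Let A and B be integral domains, f : A → B an injective ring homomorphism, and J a proper ideal of B. Then A ⋈^f J is an elementary divisor ring if and only if f(A) + J is an elementary divisor ring and f(A) ∩ J = 0. -/
/-!
If `f(A) ∩ J = 0`, the second projection `A ⋈^f J → f(A) + J` is a ring isomorphism, so the
content is the necessity of `f(A) ∩ J = 0`. Suppose `0 ≠ f a ∈ J` and diagonalize
`!![(a, 0), (0, f a); 0, 0] = U * D * V` over `A ⋈^f J`. Projected to a domain, such a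
factorization forces the first row to be a multiple of a row `V i` with `U 1 i = 0` and the other
entry of the row `U 1` a unit. Comparing the indices found over `A` and over `B` yields an element
`(u, 0)` of `A ⋈^f J` with `u` a unit, i.e. `f u ∈ J`, contradicting `J ≠ ⊤`.
-/

open Matrix

namespace IsElementaryDivisorRing

variable {R S : Type*} [CommRing R] [CommRing S]

theorem of_ringEquiv (e : R ≃+* S) (h : IsElementaryDivisorRing R) :
    IsElementaryDivisorRing S := by
  intro n M
  obtain ⟨P, Q, hP, hQ, d, hd⟩ := h n (e.symm.mapMatrix M)
  refine ⟨e.mapMatrix P, e.mapMatrix Q, hP.map _, hQ.map _, e ∘ d, ?_⟩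
  have := congrArg e.mapMatrix hd
  simpa [RingEquiv.mapMatrix_apply, diagonal_map, Function.comp_def] using this

theorem exists_eq_mul_diagonal_mul (h : IsElementaryDivisorRing R) {n : ℕ}
    (M : Matrix (Fin n) (Fin n) R) :
    ∃ U V : Matrix (Fin n) (Fin n) R, IsUnit U ∧ IsUnit V ∧
      ∃ d : Fin n → R, M = U * diagonal d * V := by
  obtain ⟨P, Q, ⟨P, rfl⟩, ⟨Q, rfl⟩, d, hd⟩ := h n M
  refine ⟨↑P⁻¹, ↑Q⁻¹, Units.isUnit _, Units.isUnit _, d, ?_⟩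
  rw [← hd, mul_assoc, Units.mul_inv_cancel_right, Units.inv_mul_cancel_left]

end IsElementaryDivisorRing

namespace Matrix

variable {K : Type*} [CommRing K]

theorem isUnit_of_isUnit_of_eq_zero_fin_two {U : Matrix (Fin 2) (Fin 2) K} (hU : IsUnit U)
    {i j k : Fin 2} (hij : U i j = 0) (hkj : k ≠ j) : IsUnit (U i k) := by
  rw [isUnit_iff_isUnit_det, det_fin_two] at hU
  fin_cases i <;> fin_cases j <;> fin_cases k <;> simp_all [IsUnit.mul_iff]

theorem map_eq_mul_diagonal_mul {L : Type*} [CommRing L] (φ : K →+* L) {n : ℕ}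
    {M U V : Matrix (Fin n) (Fin n) K} {d : Fin n → K} (h : M = U * diagonal d * V) :
    M.map φ = U.map φ * diagonal (φ ∘ d) * V.map φ := by
  simpa [RingHom.mapMatrix_apply, diagonal_map, Function.comp_def]
    using congrArg φ.mapMatrix h

theorem exists_eq_mul_row_of_eq_mul_diagonal_mul [IsDomain K] {x y : K} (hxy : x ≠ 0 ∨ y ≠ 0)
    {U V : Matrix (Fin 2) (Fin 2) K} (hU : IsUnit U) (hV : IsUnit V) {d : Fin 2 → K}
    (h : !![x, y; 0, 0] = U * diagonal d * V) :
    ∃ i c, U 1 i = 0 ∧ (∀ j, j ≠ i → IsUnit (U 1 j)) ∧ x = c * V i 0 ∧ y = c * V i 1 := by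
  have hUd : !![x, y; 0, 0] * V⁻¹ = U * diagonal d := by
    rw [h, mul_nonsing_inv_cancel_right _ _ ((isUnit_iff_isUnit_det V).mp hV)]
  have hrow : ∀ j, U 1 j * d j = 0 := fun j => by
    rw [← mul_diagonal, ← hUd]
    simp [mul_apply, Fin.sum_univ_two]
  obtain ⟨i, hi⟩ : ∃ i, d i ≠ 0 := by
    by_contra! hd
    obtain rfl : d = 0 := funext hd
    have := congrFun₂ h
    simp_all
  have hUi : U 1 i = 0 := (mul_eq_zero.mp (hrow i)).resolve_right hi
  have hunit : ∀ j, j ≠ i → IsUnit (U 1 j) := fun j hj =>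
    isUnit_of_isUnit_of_eq_zero_fin_two hU hUi hj
  have hentry : ∀ k, !![x, y; 0, 0] 0 k = U 0 i * d i * V i k := fun k => by
    rw [h, mul_apply, Finset.sum_eq_single i]
    · simp
    · intro j _ hj
      simp [(mul_eq_zero.mp (hrow j)).resolve_left (hunit j hj).ne_zero]
    · simp
  exact ⟨i, U 0 i * d i, hUi, hunit, by simpa using hentry 0, by simpa using hentry 1⟩

end Matrix

namespace amalgamation

variable {A B : Type*} [CommRing A] [CommRing B] (f : A →+* B) (J : Ideal B)

def fst : amalgamation f J →+* A := (RingHom.fst A B).comp (amalgamation f J).subtype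

def snd : amalgamation f J →+* B := (RingHom.snd A B).comp (amalgamation f J).subtype

variable {f J}

theorem not_isUnit_fst_of_snd_eq_zero (hJ : J ≠ ⊤) {z : amalgamation f J}
    (hz : snd f J z = 0) : ¬IsUnit (fst f J z) := by
  intro hu
  have hz' : (z : A × B).2 = 0 := hz
  have hmem : f (fst f J z) ∈ J := by
    simpa [fst, hz'] using J.neg_mem z.2
  exact hJ (J.eq_top_of_isUnit_mem hmem (hu.map f))

noncomputable def equivRangeAddIdeal (hf : Function.Injective f)
    (hfJ : ∀ a : A, f a ∈ J → f a = 0) : amalgamation f J ≃+* rangeAddIdeal f J :=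
  RingEquiv.ofBijective ((snd f J).codRestrict _ fun z =>
      (⟨(z : A × B).1, z.2⟩ : ∃ a, (z : A × B).2 - f a ∈ J)) <| by
    refine ⟨fun z w hzw => ?_, fun ⟨b, a, hab⟩ => ⟨⟨(a, b), hab⟩, rfl⟩⟩
    have h2 : (z : A × B).2 = (w : A × B).2 := congrArg Subtype.val hzw
    have hmem : f ((z : A × B).1 - (w : A × B).1) ∈ J := by
      simpa [h2] using J.sub_mem w.2 z.2
    have h1 : (z : A × B).1 = (w : A × B).1 := hf (by simpa [sub_eq_zero] using hfJ _ hmem)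
    exact Subtype.ext (Prod.ext h1 h2)

theorem map_eq_zero_of_mem_of_isElementaryDivisorRing [IsDomain A] [IsDomain B] (hJ : J ≠ ⊤)
    (h : IsElementaryDivisorRing (amalgamation f J)) {a : A} (ha : f a ∈ J) : f a = 0 := by
  by_contra hfa
  have ha0 : a ≠ 0 := by rintro rfl; exact hfa (map_zero f)
  let x : amalgamation f J := ⟨(a, 0), by simpa [amalgamation] using J.neg_mem ha⟩
  let y : amalgamation f J := ⟨(0, f a), by simpa [amalgamation] using ha⟩
  obtain ⟨U, V, hU, hV, d, hM⟩ := h.exists_eq_mul_diagonal_mul !![x, y; 0, 0]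
  have hMA : !![a, 0; 0, 0] = U.map (fst f J) * diagonal (fst f J ∘ d) * V.map (fst f J) := by
    rw [← map_eq_mul_diagonal_mul _ hM]; ext i j; fin_cases i <;> fin_cases j <;> rfl
  have hMB : !![0, f a; 0, 0] = U.map (snd f J) * diagonal (snd f J ∘ d) * V.map (snd f J) := by
    rw [← map_eq_mul_diagonal_mul _ hM]; ext i j; fin_cases i <;> fin_cases j <;> rfl
  obtain ⟨i, c, -, hUA, hxA, hyA⟩ := exists_eq_mul_row_of_eq_mul_diagonal_mul (Or.inl ha0)
    (hU.map (fst f J).mapMatrix) (hV.map (fst f J).mapMatrix) hMA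
  obtain ⟨i', c', hUB, -, hxB, hyB⟩ := exists_eq_mul_row_of_eq_mul_diagonal_mul (Or.inr hfa)
    (hU.map (snd f J).mapMatrix) (hV.map (snd f J).mapMatrix) hMB
  by_cases hii : i' = i
  · -- the same row of `V` over `A` and over `B`: its entry `V i 0` is `(unit, 0)`
    subst hii
    have hVA : fst f J (V i' 1) = 0 :=
      (mul_eq_zero.mp hyA.symm).resolve_left (left_ne_zero_of_mul (hxA ▸ ha0))
    have hVB : snd f J (V i' 0) = 0 :=
      (mul_eq_zero.mp hxB.symm).resolve_left (left_ne_zero_of_mul (hyB ▸ hfa))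
    exact not_isUnit_fst_of_snd_eq_zero hJ hVB
      (isUnit_of_isUnit_of_eq_zero_fin_two (hV.map (fst f J).mapMatrix) hVA (by decide))
  · -- different rows: `U 1 i'` is `(unit, 0)`
    exact not_isUnit_fst_of_snd_eq_zero hJ hUB (hUA i' hii)

end amalgamation

theorem stmt9 {A B : Type*} [CommRing A] [IsDomain A] [CommRing B] [IsDomain B]
    (f : A →+* B) (hf : Function.Injective f) (J : Ideal B) (hJ : J ≠ ⊤) :
    IsElementaryDivisorRing (amalgamation f J) ↔
      IsElementaryDivisorRing (rangeAddIdeal f J) ∧ (∀ a : A, f a ∈ J → f a = 0) := by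
  constructor
  · intro h
    have hfJ (a : A) (ha : f a ∈ J) : f a = 0 :=
      amalgamation.map_eq_zero_of_mem_of_isElementaryDivisorRing hJ h ha
    exact ⟨h.of_ringEquiv (amalgamation.equivRangeAddIdeal hf hfJ), hfJ⟩
  · rintro ⟨h, hfJ⟩
    exact h.of_ringEquiv (amalgamation.equivRangeAddIdeal hf hfJ).symm
end

section
/- Let R be an elementary divisor ring and R′ a ring with R ⊆ R′ ⊆ Q(R), where Q(R) is the total ring of quotients of R. Then R′ is an elementary divisor ring. -/
/-! Clear denominators: for a matrix `M` over `R'` there are a non-zero-divisor `d` and a matrix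
`N` over `R` with `d • M = N`. If `P * N * Q` is diagonal over `R`, then `d • (P * M * Q)` is
diagonal over `R'`, hence so is `P * M * Q`, because `d` is not a zero divisor in `R' ⊆ Q(R)`. -/

theorem Matrix.IsDiag.of_smul_mem_nonZeroDivisors {n α : Type*} [MonoidWithZero α] {d : α}
    (hd : d ∈ nonZeroDivisors α) {A : Matrix n n α} (h : (d • A).IsDiag) : A.IsDiag :=
  fun _ _ hij => hd.1 _ (h hij)

theorem IsElementaryDivisorRing.of_ringHom {R S : Type*} [CommRing R] [CommRing S]
    (hR : IsElementaryDivisorRing R) (f : R →+* S)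
    (hf : ∀ (n : ℕ) (M : Matrix (Fin n) (Fin n) S),
      ∃ d ∈ nonZeroDivisors S, ∃ N : Matrix (Fin n) (Fin n) R, d • M = N.map f) :
    IsElementaryDivisorRing S := by
  intro n M
  obtain ⟨d, hd, N, hN⟩ := hf n M
  obtain ⟨P, Q, hP, hQ, D, hD⟩ := hR n N
  refine ⟨P.map f, Q.map f, hP.map f.mapMatrix, hQ.map f.mapMatrix, ?_⟩
  have hdiag : (d • (P.map f * M * Q.map f)).IsDiag := by
    rw [← Matrix.smul_mul, ← Matrix.mul_smul, hN, ← Matrix.map_mul, ← Matrix.map_mul, hD,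
      Matrix.diagonal_map (map_zero f)]
    exact Matrix.isDiag_diagonal _
  exact ⟨_, ((Matrix.isDiag_iff_diagonal_diag _).mp (hdiag.of_smul_mem_nonZeroDivisors hd)).symm⟩

namespace IsLocalization

variable {R K : Type*} [CommRing R] [CommRing K] [Algebra R K] (S : Submonoid R)
  [IsLocalization S K] {R' : Subring K} {φ : R →+* R'} (hφ : ∀ r, (φ r : K) = algebraMap R K r)
include hφ

theorem map_mem_nonZeroDivisors_of_subring {s : R} (hs : s ∈ S) : φ s ∈ nonZeroDivisors R' :=
  mem_nonZeroDivisors_of_injective (f := R'.subtype) Subtype.val_injective <| by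
    rw [Subring.subtype_apply, hφ]
    exact (map_units K ⟨s, hs⟩).mem_nonZeroDivisors

theorem exists_smul_eq_matrix_map_of_subring {m n : Type*} [Finite m] [Finite n]
    (M : Matrix m n R') : ∃ s ∈ S, ∃ N : Matrix m n R, φ s • M = N.map φ := by
  obtain ⟨⟨s, hs⟩, hN⟩ := exist_integer_multiples_of_finite S (fun p : m × n => (M p.1 p.2 : K))
  choose N hN using hN
  refine ⟨s, hs, Matrix.of fun i j => N (i, j), Matrix.ext fun i j => Subtype.ext ?_⟩
  simp [hφ, hN, Algebra.smul_def]

end IsLocalization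

theorem stmt11 {R : Type*} [CommRing R] (hR : IsElementaryDivisorRing R)
    (R' : Subring (FractionRing R))
    (h : (algebraMap R (FractionRing R)).range ≤ R') :
    IsElementaryDivisorRing R' := by
  let φ : R →+* R' := (algebraMap R _).codRestrict R' fun r => h ⟨r, rfl⟩
  have hφ : ∀ r, (φ r : FractionRing R) = algebraMap R _ r := fun _ => rfl
  refine hR.of_ringHom φ fun n M => ?_
  obtain ⟨s, hs, N, hN⟩ :=
    IsLocalization.exists_smul_eq_matrix_map_of_subring (nonZeroDivisors R) hφ M
  exact ⟨φ s, IsLocalization.map_mem_nonZeroDivisors_of_subring _ hφ hs, N, hN⟩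
end

section
/- Let A be a Bézout domain with quotient field K and let i : A ↪ K[[x]] be the inclusion. Then A ⋈^i (xK[[x]]) is an Hermite ring; equivalently, the subring A + xK[[x]] of K[[x]] is a Bézout domain. -/
/-!
Write `S = A + X K⟦X⟧`. Since `K⟦X⟧` is a valuation ring, for `f, g ∈ S` we may assume `g = f t`
with `t ∈ K⟦X⟧`. Over the Bézout domain `A` the constant term of `t` is a fraction `r / q` with
`α q + β r = 1`, so `w = α + β t` has constant term `1 / q`: it is a unit of `K⟦X⟧` with
`w⁻¹, t w⁻¹ ∈ S`. Then `d = f w = α f + β g` lies in `S`, and `f = w⁻¹ d`, `g = (t w⁻¹) d` with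
`α w⁻¹ + β (t w⁻¹) = 1`. Hence `S` is Hermite, and a Hermite ring is Bézout because
`(a₁ d, b₁ d) = (a₁, b₁) (d) = (d)`.
-/

open PowerSeries

theorem IsHermiteRing.isBezout {R : Type*} [CommRing R] (h : IsHermiteRing R) : IsBezout R := by
  rw [IsBezout.iff_span_pair_isPrincipal]
  intro a b
  obtain ⟨a₁, b₁, d, rfl, rfl, hunit⟩ := h a b
  refine ⟨d, ?_⟩
  change _ = Ideal.span {d}
  rw [← Ideal.top_mul (Ideal.span {d}), ← hunit, Ideal.span_mul_span', Set.mul_singleton,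
    Set.image_pair]

theorem Ideal.span_pair_eq_top_iff_isCoprime {R : Type*} [CommRing R] (a b : R) :
    Ideal.span {a, b} = ⊤ ↔ IsCoprime a b := by
  rw [Ideal.span_insert, Ideal.sup_eq_top_iff_isCoprime]

theorem IsFractionRing.exists_isCoprime_div_eq {A K : Type*} [CommRing A] [IsDomain A] [IsBezout A]
    [Field K] [Algebra A K] [IsFractionRing A K] (c : K) :
    ∃ q r : A, q ≠ 0 ∧ IsCoprime q r ∧ algebraMap A K r / algebraMap A K q = c := by
  obtain ⟨r, q, hq, rfl⟩ := IsFractionRing.div_surjective A c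
  have hq0 : q ≠ 0 := nonZeroDivisors.ne_zero hq
  obtain ⟨q₁, hq₁⟩ := IsBezout.gcd_dvd_left q r
  obtain ⟨r₁, hr₁⟩ := IsBezout.gcd_dvd_right q r
  obtain ⟨α, β, hαβ⟩ := IsBezout.gcd_eq_sum q r
  generalize IsBezout.gcd q r = s at hq₁ hr₁ hαβ
  have hs : s ≠ 0 := by rintro h; rw [h, zero_mul] at hq₁; exact hq0 hq₁
  refine ⟨q₁, r₁, right_ne_zero_of_mul (hq₁ ▸ hq0), ⟨α, β, ?_⟩, ?_⟩
  · refine mul_left_cancel₀ hs ?_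
    linear_combination hαβ - α * hq₁ - β * hr₁
  · have hsK : algebraMap A K s ≠ 0 :=
      (map_ne_zero_iff _ (IsFractionRing.injective A K)).mpr hs
    rw [hq₁, hr₁, map_mul, map_mul, mul_div_mul_left _ _ hsK]

section

variable {A K : Type*} [CommRing A] [Field K] [Algebra A K] {S : Subring K⟦X⟧}

theorem C_algebraMap_mem (hS : ∀ g : K⟦X⟧, g ∈ S ↔ constantCoeff g ∈ (algebraMap A K).range)
    (a : A) : C (algebraMap A K a) ∈ S :=
  (hS _).2 ⟨a, (constantCoeff_C _).symm⟩

theorem exists_isCoprime_mul_of_dvd [IsDomain A] [IsBezout A] [IsFractionRing A K]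
    (hS : ∀ g : K⟦X⟧, g ∈ S ↔ constantCoeff g ∈ (algebraMap A K).range)
    {f g : S} (hfg : (f : K⟦X⟧) ∣ g) :
    ∃ a₁ b₁ d : S, f = a₁ * d ∧ g = b₁ * d ∧ IsCoprime a₁ b₁ := by
  obtain ⟨t, ht⟩ := hfg
  obtain ⟨q, r, hq, ⟨α, β, hαβ⟩, hc⟩ :=
    IsFractionRing.exists_isCoprime_div_eq (A := A) (constantCoeff t)
  have hqK : algebraMap A K q ≠ 0 := (map_ne_zero_iff _ (IsFractionRing.injective A K)).mpr hq
  set w := C (algebraMap A K α) + C (algebraMap A K β) * t with hw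
  have hw0 : constantCoeff w = (algebraMap A K q)⁻¹ := by
    rw [hw, map_add, map_mul, constantCoeff_C, constantCoeff_C, ← hc]
    field_simp
    rw [← map_mul, ← map_mul, ← map_add, hαβ, map_one]
  have hww : w⁻¹ * w = 1 := PowerSeries.inv_mul_cancel w (by rw [hw0]; exact inv_ne_zero hqK)
  have hwS : w⁻¹ ∈ S := (hS _).2 ⟨q, by rw [constantCoeff_inv, hw0, inv_inv]⟩
  have htwS : t * w⁻¹ ∈ S :=
    (hS _).2 ⟨r, by rw [map_mul, constantCoeff_inv, hw0, inv_inv, ← hc, div_mul_cancel₀ _ hqK]⟩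
  have hdS : (f : K⟦X⟧) * w ∈ S := by
    have hd : (f : K⟦X⟧) * w = C (algebraMap A K α) * f + C (algebraMap A K β) * g := by
      rw [hw, ht]; ring
    rw [hd]
    exact add_mem (mul_mem (C_algebraMap_mem hS α) f.2) (mul_mem (C_algebraMap_mem hS β) g.2)
  refine ⟨⟨w⁻¹, hwS⟩, ⟨t * w⁻¹, htwS⟩, ⟨f * w, hdS⟩, ?_, ?_,
    ⟨⟨_, C_algebraMap_mem hS α⟩, ⟨_, C_algebraMap_mem hS β⟩, ?_⟩⟩ <;> apply Subtype.ext <;> push_cast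
  · linear_combination (-(f : K⟦X⟧)) * hww
  · linear_combination ht - (f : K⟦X⟧) * t * hww
  · linear_combination hww - w⁻¹ * hw

theorem isHermiteRing_of_constantCoeff_mem_range [IsDomain A] [IsBezout A] [IsFractionRing A K]
    (hS : ∀ g : K⟦X⟧, g ∈ S ↔ constantCoeff g ∈ (algebraMap A K).range) : IsHermiteRing S := by
  intro f g
  simp_rw [Ideal.span_pair_eq_top_iff_isCoprime]
  rcases ValuationRing.dvd_total (f : K⟦X⟧) g with hfg | hgf
  · exact exists_isCoprime_mul_of_dvd hS hfg
  · obtain ⟨b₁, a₁, d, hg, hf, hba⟩ := exists_isCoprime_mul_of_dvd hS hgf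
    exact ⟨a₁, b₁, d, hf, hg, hba.symm⟩

end

theorem stmt17 {A : Type*} [CommRing A] [IsDomain A] [IsBezout A]
    (S : Subring (PowerSeries (FractionRing A)))
    (hS : ∀ g : PowerSeries (FractionRing A),
      g ∈ S ↔ PowerSeries.constantCoeff g ∈ (algebraMap A (FractionRing A)).range) :
    IsHermiteRing S ∧ IsBezout S := by
  have hHermite := isHermiteRing_of_constantCoeff_mem_range hS
  exact ⟨hHermite, hHermite.isBezout⟩
end

section
/- Let R be a Bézout domain and R′ a ring with R ⊆ R′ ⊆ qf(R), where qf(R) is the quotient field of R. Then R′ is a Bézout domain. -/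
/-!
Two elements `x, y` of `R'` have a common denominator: `x s = a`, `y s = b` with `a, b ∈ R`,
and `s` is a non-zero-divisor of `R'` because it becomes a unit in the localization. Write
`d = gcd(a, b) = u a + v b` in the Bézout ring `R`. Then `g = u x + v y` satisfies `g s = d`,
and cancelling `s` in `a = c d`, `b = e d` gives `x = c g`, `y = e g`; hence `(x, y) = (g)`.
-/

open scoped nonZeroDivisors

theorem IsBezout.span_pair_isPrincipal_of_mul_eq {R S : Type*} [CommRing R] [IsBezout R]
    [CommRing S] (f : R →+* S) {x y : S} {s a b : R} (hs : f s ∈ S⁰)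
    (hx : x * f s = f a) (hy : y * f s = f b) : (Ideal.span {x, y}).IsPrincipal := by
  obtain ⟨u, v, hd⟩ := IsBezout.gcd_eq_sum a b
  obtain ⟨c, hc⟩ := IsBezout.gcd_dvd_left a b
  obtain ⟨e, he⟩ := IsBezout.gcd_dvd_right a b
  set g := f u * x + f v * y
  have hg : g * f s = f (IsBezout.gcd a b) := by
    rw [← hd, add_mul, mul_assoc, mul_assoc, hx, hy]
    simp only [map_add, map_mul]
  have hxg : x = f c * g := by
    rw [← mul_cancel_right_mem_nonZeroDivisors hs, mul_assoc, hg, hx, ← map_mul, mul_comm c, ← hc]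
  have hyg : y = f e * g := by
    rw [← mul_cancel_right_mem_nonZeroDivisors hs, mul_assoc, hg, hy, ← map_mul, mul_comm e, ← he]
  refine ⟨g, le_antisymm ?_ ?_⟩
  · rw [Ideal.span_le, Set.insert_subset_iff, Set.singleton_subset_iff]
    exact ⟨Ideal.mem_span_singleton'.2 ⟨f c, hxg.symm⟩, Ideal.mem_span_singleton'.2 ⟨f e, hyg.symm⟩⟩
  · rw [Ideal.submodule_span_eq, Ideal.span_singleton_le_iff_mem]
    exact Ideal.mem_span_pair.2 ⟨f u, f v, rfl⟩

theorem IsLocalization.isBezout_of_range_le {R L : Type*} [CommRing R] [IsBezout R]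
    [CommRing L] [Algebra R L] (M : Submonoid R) [IsLocalization M L] (R' : Subring L)
    (h : (algebraMap R L).range ≤ R') : IsBezout R' := by
  let f : R →+* R' := (algebraMap R L).codRestrict R' fun r ↦ h ⟨r, rfl⟩
  refine (IsBezout.iff_span_pair_isPrincipal).2 fun x y ↦ ?_
  obtain ⟨a, b, s, hx, hy⟩ := IsLocalization.surj₂ M L x y
  have hs : f s ∈ R'⁰ :=
    mem_nonZeroDivisors_of_injective (f := R'.subtype) Subtype.val_injective
      (map_units L s).mem_nonZeroDivisors
  exact IsBezout.span_pair_isPrincipal_of_mul_eq f hs (Subtype.ext hx) (Subtype.ext hy)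

theorem stmt18_general {R : Type*} [CommRing R] [IsBezout R]
    (R' : Subring (FractionRing R))
    (h : (algebraMap R (FractionRing R)).range ≤ R') :
    IsBezout R' :=
  IsLocalization.isBezout_of_range_le R⁰ R' h

theorem stmt18 {R : Type*} [CommRing R] [IsDomain R] [IsBezout R]
    (R' : Subring (FractionRing R))
    (h : (algebraMap R (FractionRing R)).range ≤ R') :
    IsBezout R' :=
  stmt18_general R' h
end
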